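/- Let α = {α_n}_{n≥1} ⊂ (0,1) be a sequence of ratios with associated generalized Cantor set C ⊂ [0,1], let l_n denote the common length of the 2^{n-1} open intervals removed at stage n, and let I = [0,1] \ C. If there exists δ ∈ (0,1) such that ∑_{n=1}^∞ l_n^{1/4^{n/δ}} < ∞, then there exists a constant λ > 0 such that for every ξ ≠ 0, |(χ_I)^(ξ)|² ≤ λ·(1 + (log(1+|ξ|))^δ)/|ξ|², where (χ_I)^ is the Fourier transform of the indicator function of I. -/

import Mathlib

open MeasureTheory

/-- Length of each of the `2^n` closed intervals making up the `n`-th stage `Cₙ`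
of the generalized Cantor construction with ratios `α` (indexed from `0`,
so `α n` is the ratio `α_{n+1}` of the paper). -/
noncomputable def stageLen (α : ℕ → ℝ) : ℕ → ℝ
  | 0 => 1
  | n + 1 => stageLen α n * (1 - α n) / 2

/-- Left endpoints of the `2^n` closed intervals making up the `n`-th stage,
indexed by `b : Fin n → Bool` (`false` = left child, `true` = right child). -/
noncomputable def leftPt (α : ℕ → ℝ) : (n : ℕ) → (Fin n → Bool) → ℝ
  | 0, _ => 0
  | n + 1, b =>
      leftPt α n (fun i => b i.castSucc) +
        (if b (Fin.last n) then stageLen α n - stageLen α (n + 1) else 0)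

/-- The `n`-th stage `Cₙ` of the generalized Cantor construction: `C₀ = [0,1]`,
and `C_{n+1}` is obtained from `Cₙ` by removing the open middle `α_{n+1}`-th
of each of its `2^n` component closed intervals. -/
noncomputable def cantorStage (α : ℕ → ℝ) (n : ℕ) : Set ℝ :=
  ⋃ b : Fin n → Bool, Set.Icc (leftPt α n b) (leftPt α n b + stageLen α n)

/-- The generalized Cantor set `C = ⋂ₙ Cₙ` associated with the ratios `α`. -/
noncomputable def gCantorSet (α : ℕ → ℝ) : Set ℝ :=
  ⋂ n, cantorStage α n

/-- The common length of the `2^n` open intervals removed when passing from `Cₙ`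
to `C_{n+1}`; this is the quantity `l_{n+1}` of the paper. -/
noncomputable def removedLen (α : ℕ → ℝ) (n : ℕ) : ℝ :=
  stageLen α n * α n

/-!
At any stage `N` the complement `I = [0,1] \ C` splits into the `2^N - 1` open intervals removed
before stage `N` and the remainder `C_N \ C`. The Fourier transform of the indicator of an interval
is at most `1/(π|ξ|)`, and that of the remainder is at most its measure, which is at most
`∑_{n ≥ N} 2^n l_{n+1}`. Summability forces `l_{n+1} ≤ 2^(-4^((n+1)/δ))` for large `n`, so as soon
as `|ξ| ≤ 2^(4^((N+1)/δ))` the remainder has measure `O(2^N/|ξ|)`. Taking the least such `N` gives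
`4^N = O(1 + log(1+|ξ|)^δ)`, and squaring `|𝓕 χ_I(ξ)| = O(2^N/|ξ|)` gives the bound.
-/

open Set Function Real FourierTransform

theorem sdiff_iInter_subset_iUnion_sdiff_succ {β : Type*} {s : ℕ → Set β} (hs : Antitone s)
    (N : ℕ) : s N \ ⋂ n, s n ⊆ ⋃ k, s (N + k) \ s (N + k + 1) := by
  rintro x ⟨hxN, hx⟩
  by_contra! h
  simp only [mem_iUnion, mem_sdiff, not_exists, not_and, not_not] at h
  have hmem : ∀ k, x ∈ s (N + k) := fun k => by
    induction k with
    | zero => exact hxN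
    | succ k ih => exact h k ih
  exact hx (mem_iInter.2 fun n => hs (Nat.le_add_left n N) (hmem n))

section FourierIndicator

variable {A B : Set ℝ}

theorem fourier_indicator_eq_setIntegral (hA : MeasurableSet A) (ξ : ℝ) :
    𝓕 (A.indicator fun _ => (1 : ℂ)) ξ = ∫ x in A, (𝐞 (-(x * ξ)) : ℂ) := by
  rw [Real.fourier_real_eq, ← integral_indicator hA]
  congr 1 with x
  by_cases hx : x ∈ A <;> simp [hx, Circle.smul_def]

theorem norm_fourier_indicator_le (hA : MeasurableSet A) (ξ : ℝ) :
    ‖𝓕 (A.indicator fun _ => (1 : ℂ)) ξ‖ ≤ volume.real A := by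
  rw [fourier_indicator_eq_setIntegral hA]
  refine (norm_integral_le_integral_norm _).trans_eq ?_
  simp_rw [Circle.norm_coe]
  simp

theorem volume_ne_top_of_subset_Icc {a b : ℝ} (h : A ⊆ Icc a b) : volume A ≠ ⊤ :=
  measure_ne_top_of_subset h measure_Icc_lt_top.ne

theorem integrableOn_fourierChar (hA : volume A ≠ ⊤) (ξ : ℝ) :
    IntegrableOn (fun x : ℝ => (𝐞 (-(x * ξ)) : ℂ)) A :=
  Measure.integrableOn_of_bounded hA (by fun_prop) (M := 1)
    (ae_of_all _ fun x => (Circle.norm_coe _).le)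

theorem fourier_indicator_union (hAB : Disjoint A B) (hA : MeasurableSet A)
    (hB : MeasurableSet B) (hA' : volume A ≠ ⊤) (hB' : volume B ≠ ⊤) (ξ : ℝ) :
    𝓕 ((A ∪ B).indicator fun _ => (1 : ℂ)) ξ =
      𝓕 (A.indicator fun _ => (1 : ℂ)) ξ + 𝓕 (B.indicator fun _ => (1 : ℂ)) ξ := by
  simp only [fourier_indicator_eq_setIntegral, hA, hB, hA.union hB]
  exact setIntegral_union hAB hB (integrableOn_fourierChar hA' ξ) (integrableOn_fourierChar hB' ξ)

theorem norm_setIntegral_fourierChar_Ioo_le (u v : ℝ) {ξ : ℝ} (hξ : ξ ≠ 0) :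
    ‖∫ x in Ioo u v, (𝐞 (-(x * ξ)) : ℂ)‖ ≤ 1 / (π * |ξ|) := by
  rcases lt_or_ge v u with hvu | huv
  · rw [Ioo_eq_empty_of_le hvu.le, setIntegral_empty, norm_zero]
    positivity
  set c : ℂ := ↑(-2 * π * ξ) * Complex.I
  have hc : ‖c‖ = 2 * π * |ξ| := by
    simp [c, abs_of_pos pi_pos]
  have hexp : ∀ x : ℝ, (𝐞 (-(x * ξ)) : ℂ) = Complex.exp (c * x) := fun x => by
    rw [Real.fourierChar_apply]; congr 1; simp only [c]; push_cast; ring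
  have hnorm : ∀ x : ℝ, ‖Complex.exp (c * x)‖ = 1 := fun x => by
    rw [← hexp, Circle.norm_coe]
  have hc0 : c ≠ 0 := norm_ne_zero_iff.1 (by rw [hc]; positivity)
  simp_rw [hexp]
  rw [← integral_Ioc_eq_integral_Ioo, ← intervalIntegral.integral_of_le huv,
    integral_exp_mul_complex hc0, norm_div, hc]
  calc ‖Complex.exp (c * v) - Complex.exp (c * u)‖ / (2 * π * |ξ|)
      ≤ 2 / (2 * π * |ξ|) := by
        gcongr
        exact (norm_sub_le _ _).trans (by rw [hnorm, hnorm]; norm_num)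
    _ = 1 / (π * |ξ|) := by field_simp

end FourierIndicator

section CantorStages

variable {α : ℕ → ℝ}

noncomputable def stagePiece (α : ℕ → ℝ) (n : ℕ) (b : Fin n → Bool) : Set ℝ :=
  Icc (leftPt α n b) (leftPt α n b + stageLen α n)

noncomputable def stageGap (α : ℕ → ℝ) (n : ℕ) (b : Fin n → Bool) : Set ℝ :=
  Ioo (leftPt α n b + stageLen α (n + 1)) (leftPt α n b + stageLen α n - stageLen α (n + 1))

theorem stageLen_pos (hα : ∀ n, α n ∈ Ioo (0 : ℝ) 1) (n : ℕ) : 0 < stageLen α n := by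
  induction n with
  | zero => simp [stageLen]
  | succ n ih =>
    have : 0 < 1 - α n := by linarith [(hα n).2]
    simp only [stageLen]
    positivity

theorem two_mul_stageLen_succ_lt (hα : ∀ n, α n ∈ Ioo (0 : ℝ) 1) (n : ℕ) :
    2 * stageLen α (n + 1) < stageLen α n := by
  have := stageLen_pos hα n
  have := (hα n).1
  simp only [stageLen]
  nlinarith

theorem removedLen_pos (hα : ∀ n, α n ∈ Ioo (0 : ℝ) 1) (n : ℕ) : 0 < removedLen α n :=
  mul_pos (stageLen_pos hα n) (hα n).1

theorem leftPt_snoc {n : ℕ} (b : Fin n → Bool) (c : Bool) :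
    leftPt α (n + 1) (Fin.snoc b c) =
      leftPt α n b + if c then stageLen α n - stageLen α (n + 1) else 0 := by
  simp [leftPt]

theorem stagePiece_snoc_subset (hα : ∀ n, α n ∈ Ioo (0 : ℝ) 1) {n : ℕ} (b : Fin n → Bool)
    (c : Bool) : stagePiece α (n + 1) (Fin.snoc b c) ⊆ stagePiece α n b := by
  have := two_mul_stageLen_succ_lt hα n
  have := stageLen_pos hα (n + 1)
  cases c <;>
    simp only [stagePiece, leftPt_snoc, ite_true, Bool.false_eq_true, ite_false, add_zero] <;>
    exact Icc_subset_Icc (by linarith) (by linarith)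

theorem stagePiece_snoc_false_disjoint_true (hα : ∀ n, α n ∈ Ioo (0 : ℝ) 1) {n : ℕ}
    (b : Fin n → Bool) :
    Disjoint (stagePiece α (n + 1) (Fin.snoc b false))
      (stagePiece α (n + 1) (Fin.snoc b true)) := by
  have := two_mul_stageLen_succ_lt hα n
  rw [Set.disjoint_left]
  rintro x ⟨-, hx⟩ ⟨hx', -⟩
  simp only [leftPt_snoc, ite_true, Bool.false_eq_true, ite_false, add_zero] at hx hx'
  linarith

theorem pairwise_disjoint_stagePiece (hα : ∀ n, α n ∈ Ioo (0 : ℝ) 1) (n : ℕ) :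
    Pairwise (Disjoint on (stagePiece α n)) := by
  induction n with
  | zero => exact fun b b' h => absurd (Subsingleton.elim b b') h
  | succ n ih =>
    intro b b' hne
    induction b using Fin.snocCases with | snoc b c =>
    induction b' using Fin.snocCases with | snoc b' c' =>
    by_cases hb : b = b'
    · subst hb
      have hc : c ≠ c' := fun h => hne (by rw [h])
      cases c <;> cases c'
      · exact absurd rfl hc
      · exact stagePiece_snoc_false_disjoint_true hα b
      · exact (stagePiece_snoc_false_disjoint_true hα b).symm
      · exact absurd rfl hc
    · exact (ih hb).mono (stagePiece_snoc_subset hα b c) (stagePiece_snoc_subset hα b' c')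

theorem cantorStage_eq_iUnion_stagePiece (n : ℕ) : cantorStage α n = ⋃ b, stagePiece α n b := rfl

theorem cantorStage_succ (n : ℕ) :
    cantorStage α (n + 1) =
      ⋃ (b : Fin n → Bool) (c : Bool), stagePiece α (n + 1) (Fin.snoc b c) := by
  ext x
  simp only [cantorStage, mem_iUnion]
  constructor
  · rintro ⟨b, hb⟩
    exact ⟨Fin.init b, b (Fin.last n), by rwa [Fin.snoc_init_self]⟩
  · rintro ⟨b, c, hb⟩
    exact ⟨_, hb⟩

theorem cantorStage_zero : cantorStage α 0 = Icc 0 1 := by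
  simp [cantorStage, leftPt, stageLen, iUnion_const]

theorem cantorStage_antitone (hα : ∀ n, α n ∈ Ioo (0 : ℝ) 1) : Antitone (cantorStage α) := by
  refine antitone_nat_of_succ_le fun n => ?_
  rw [cantorStage_succ]
  exact iUnion₂_subset fun b c => (stagePiece_snoc_subset hα b c).trans (subset_iUnion _ b)

theorem cantorStage_subset_Icc (hα : ∀ n, α n ∈ Ioo (0 : ℝ) 1) (n : ℕ) :
    cantorStage α n ⊆ Icc 0 1 :=
  cantorStage_zero (α := α) ▸ cantorStage_antitone hα n.zero_le

theorem gCantorSet_subset_cantorStage (n : ℕ) : gCantorSet α ⊆ cantorStage α n :=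
  iInter_subset _ n

theorem measurableSet_cantorStage (n : ℕ) : MeasurableSet (cantorStage α n) :=
  .iUnion fun _ => measurableSet_Icc

theorem measurableSet_gCantorSet : MeasurableSet (gCantorSet α) :=
  .iInter fun _ => measurableSet_cantorStage _

theorem stageGap_subset_stagePiece (hα : ∀ n, α n ∈ Ioo (0 : ℝ) 1) {n : ℕ} (b : Fin n → Bool) :
    stageGap α n b ⊆ stagePiece α n b := by
  have := stageLen_pos hα (n + 1)
  exact fun x ⟨h₁, h₂⟩ => ⟨by linarith, by linarith⟩

theorem mem_stageGap_iff (hα : ∀ n, α n ∈ Ioo (0 : ℝ) 1) {n : ℕ} (b : Fin n → Bool) (x : ℝ) :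
    x ∈ stageGap α n b ↔ x ∈ stagePiece α n b ∧ ∀ c, x ∉ stagePiece α (n + 1) (Fin.snoc b c) := by
  have := two_mul_stageLen_succ_lt hα n
  have := stageLen_pos hα (n + 1)
  simp only [stageGap, stagePiece, leftPt_snoc, Bool.forall_bool, mem_Ioo, mem_Icc, ite_true,
    Bool.false_eq_true, ite_false, add_zero, not_and, not_le]
  constructor
  · rintro ⟨h₁, h₂⟩
    refine ⟨⟨by linarith, by linarith⟩, fun _ => h₁, fun h => by linarith⟩
  · rintro ⟨⟨h₁, h₂⟩, h₃, h₄⟩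
    constructor
    · exact h₃ h₁
    · by_contra! h
      linarith [h₄ (by linarith)]

theorem cantorStage_diff_succ (hα : ∀ n, α n ∈ Ioo (0 : ℝ) 1) (n : ℕ) :
    cantorStage α n \ cantorStage α (n + 1) = ⋃ b, stageGap α n b := by
  ext x
  simp only [cantorStage_succ, cantorStage_eq_iUnion_stagePiece n, mem_sdiff, mem_iUnion,
    not_exists, mem_stageGap_iff hα]
  constructor
  · rintro ⟨⟨b, hb⟩, hx⟩
    exact ⟨b, hb, hx b⟩
  · rintro ⟨b, hb, hx⟩
    refine ⟨⟨b, hb⟩, fun b' c hb' => ?_⟩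
    obtain rfl : b' = b := by
      by_contra hne
      exact (pairwise_disjoint_stagePiece hα n hne).ne_of_mem
        (stagePiece_snoc_subset hα b' c hb') hb rfl
    exact hx c hb'

theorem volume_real_stageGap (hα : ∀ n, α n ∈ Ioo (0 : ℝ) 1) (n : ℕ) (b : Fin n → Bool) :
    volume.real (stageGap α n b) = removedLen α n := by
  have := two_mul_stageLen_succ_lt hα n
  rw [stageGap, Real.volume_real_Ioo_of_le (by linarith), removedLen]
  simp only [stageLen]
  ring

theorem volume_real_cantorStage_diff_succ_le (hα : ∀ n, α n ∈ Ioo (0 : ℝ) 1) (n : ℕ) :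
    volume.real (cantorStage α n \ cantorStage α (n + 1)) ≤ 2 ^ n * removedLen α n := by
  rw [cantorStage_diff_succ hα]
  refine (measureReal_iUnion_fintype_le _).trans_eq ?_
  simp [volume_real_stageGap hα]

theorem norm_fourier_indicator_cantorStage_diff_succ_le (hα : ∀ n, α n ∈ Ioo (0 : ℝ) 1)
    (n : ℕ) {ξ : ℝ} (hξ : ξ ≠ 0) :
    ‖𝓕 ((cantorStage α n \ cantorStage α (n + 1)).indicator fun _ => (1 : ℂ)) ξ‖ ≤
      2 ^ n / (π * |ξ|) := by
  have hgap : ∀ b, stageGap α n b ⊆ Icc 0 1 := fun b =>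
    (stageGap_subset_stagePiece hα b).trans
      ((subset_iUnion (stagePiece α n) b).trans (cantorStage_subset_Icc hα n))
  rw [fourier_indicator_eq_setIntegral
      ((measurableSet_cantorStage n).diff (measurableSet_cantorStage (n + 1))),
    cantorStage_diff_succ hα,
    integral_iUnion_fintype (s := stageGap α n) (fun _ => measurableSet_Ioo)
      (fun b b' h => (pairwise_disjoint_stagePiece hα n h).mono
        (stageGap_subset_stagePiece hα b) (stageGap_subset_stagePiece hα b'))
      (fun b => integrableOn_fourierChar (volume_ne_top_of_subset_Icc (hgap b)) ξ)]
  refine (norm_sum_le _ _).trans ?_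
  refine (Finset.sum_le_sum fun b _ => norm_setIntegral_fourierChar_Ioo_le _ _ hξ).trans_eq ?_
  simp [div_eq_mul_inv]

theorem norm_fourier_indicator_Icc_diff_cantorStage_le (hα : ∀ n, α n ∈ Ioo (0 : ℝ) 1)
    (N : ℕ) {ξ : ℝ} (hξ : ξ ≠ 0) :
    ‖𝓕 ((Icc 0 1 \ cantorStage α N).indicator fun _ => (1 : ℂ)) ξ‖ ≤ 2 ^ N / (π * |ξ|) := by
  induction N with
  | zero =>
    rw [cantorStage_zero, sdiff_self]
    refine (norm_fourier_indicator_le .empty ξ).trans ?_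
    simp only [measureReal_empty]
    positivity
  | succ N ih =>
    have hsub := cantorStage_subset_Icc hα N
    have hmeas := measurableSet_cantorStage (α := α)
    rw [← sdiff_union_sdiff_cancel hsub (cantorStage_antitone hα N.le_succ),
      fourier_indicator_union (disjoint_sdiff_left.mono_right sdiff_subset)
        (measurableSet_Icc.diff (hmeas N)) ((hmeas N).diff (hmeas (N + 1)))
        (volume_ne_top_of_subset_Icc sdiff_subset)
        (volume_ne_top_of_subset_Icc (sdiff_subset.trans hsub))]
    calc _ ≤ 2 ^ N / (π * |ξ|) + 2 ^ N / (π * |ξ|) :=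
          (norm_add_le _ _).trans
            (add_le_add ih (norm_fourier_indicator_cantorStage_diff_succ_le hα N hξ))
      _ = 2 ^ (N + 1) / (π * |ξ|) := by ring

theorem volume_real_cantorStage_diff_gCantorSet_le (hα : ∀ n, α n ∈ Ioo (0 : ℝ) 1) (N : ℕ)
    {a : ℕ → ℝ} (ha : Summable a) (hle : ∀ k, 2 ^ (N + k) * removedLen α (N + k) ≤ a k) :
    volume.real (cantorStage α N \ gCantorSet α) ≤ ∑' k, a k := by
  have ha₀ : ∀ k, 0 ≤ a k := fun k =>
    (mul_pos (pow_pos two_pos _) (removedLen_pos hα (N + k))).le.trans (hle k)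
  refine ENNReal.toReal_le_of_le_ofReal (tsum_nonneg ha₀) ?_
  calc volume (cantorStage α N \ gCantorSet α)
      ≤ volume (⋃ k, cantorStage α (N + k) \ cantorStage α (N + k + 1)) :=
        measure_mono (sdiff_iInter_subset_iUnion_sdiff_succ (cantorStage_antitone hα) N)
    _ ≤ ∑' k, volume (cantorStage α (N + k) \ cantorStage α (N + k + 1)) := measure_iUnion_le _
    _ ≤ ∑' k, ENNReal.ofReal (a k) := ENNReal.tsum_le_tsum fun k =>
        (ENNReal.le_ofReal_iff_toReal_le
          (volume_ne_top_of_subset_Icc (sdiff_subset.trans (cantorStage_subset_Icc hα _)))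
          (ha₀ k)).2 ((volume_real_cantorStage_diff_succ_le hα _).trans (hle k))
    _ = ENNReal.ofReal (∑' k, a k) := (ENNReal.ofReal_tsum_of_nonneg ha₀ ha).symm

theorem norm_fourier_indicator_Icc_diff_gCantorSet_le (hα : ∀ n, α n ∈ Ioo (0 : ℝ) 1) (N : ℕ)
    {ξ : ℝ} (hξ : ξ ≠ 0) :
    ‖𝓕 ((Icc 0 1 \ gCantorSet α).indicator fun _ => (1 : ℂ)) ξ‖ ≤
      2 ^ N / (π * |ξ|) + volume.real (cantorStage α N \ gCantorSet α) := by
  have hsub := cantorStage_subset_Icc hα N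
  have hmeas := measurableSet_cantorStage (α := α) N
  rw [← sdiff_union_sdiff_cancel hsub (gCantorSet_subset_cantorStage N),
    fourier_indicator_union (disjoint_sdiff_left.mono_right sdiff_subset)
      (measurableSet_Icc.diff hmeas) (hmeas.diff measurableSet_gCantorSet)
      (volume_ne_top_of_subset_Icc sdiff_subset)
      (volume_ne_top_of_subset_Icc (sdiff_subset.trans hsub))]
  exact (norm_add_le _ _).trans (add_le_add
    (norm_fourier_indicator_Icc_diff_cantorStage_le hα N hξ)
    (norm_fourier_indicator_le (hmeas.diff measurableSet_gCantorSet) ξ))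

end CantorStages

section GapScale

noncomputable def gapScale (δ : ℝ) (n : ℕ) : ℝ := 4 ^ (((n : ℝ) + 1) / δ)

variable {δ : ℝ}

theorem gapScale_pos (n : ℕ) : 0 < gapScale δ n := by
  unfold gapScale; positivity

theorem gapScale_inv (n : ℕ) : (gapScale δ n)⁻¹ = 4 ^ (-((n : ℝ) + 1) / δ) := by
  rw [gapScale, neg_div, rpow_neg (by norm_num)]

theorem gapScale_add_le (hδ : 0 < δ) (hδ1 : δ ≤ 1) (N k : ℕ) :
    gapScale δ N + 2 * k ≤ gapScale δ (N + k) := by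
  have hsplit : gapScale δ (N + k) = gapScale δ N * 4 ^ ((k : ℝ) / δ) := by
    rw [gapScale, gapScale, ← rpow_add (by norm_num)]
    push_cast
    ring_nf
  have hN : 1 ≤ gapScale δ N := one_le_rpow (by norm_num) (by positivity)
  have hk : 1 + 2 * (k : ℝ) ≤ 4 ^ ((k : ℝ) / δ) :=
    calc 1 + 2 * (k : ℝ) ≤ 1 + 3 * k := by linarith [k.cast_nonneg (α := ℝ)]
      _ ≤ 4 ^ k := by
        have := one_add_mul_le_pow (by norm_num : (-2 : ℝ) ≤ 3) k
        norm_num at this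
        linarith
      _ = 4 ^ (k : ℝ) := (rpow_natCast 4 k).symm
      _ ≤ 4 ^ ((k : ℝ) / δ) :=
        rpow_le_rpow_of_exponent_le (by norm_num) (le_div_self k.cast_nonneg hδ hδ1)
  rw [hsplit]
  nlinarith

theorem eventually_le_two_rpow_neg_of_summable {a E : ℕ → ℝ} (ha : ∀ n, 0 ≤ a n)
    (hE : ∀ n, 0 < E n) (h : Summable fun n => a n ^ (E n)⁻¹) :
    ∀ᶠ n in Filter.atTop, a n ≤ 2 ^ (-E n) := by
  filter_upwards [h.tendsto_atTop_zero.eventually_le_const (by norm_num : (0 : ℝ) < 1 / 2)]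
    with n hn
  calc a n = (a n ^ (E n)⁻¹) ^ E n := by
        rw [← rpow_mul (ha n), inv_mul_cancel₀ (hE n).ne', rpow_one]
    _ ≤ (1 / 2) ^ E n := rpow_le_rpow (rpow_nonneg (ha n) _) hn (hE n).le
    _ = 2 ^ (-E n) := by rw [rpow_neg zero_le_two, one_div, inv_rpow zero_le_two]

theorem two_pow_mul_le_of_le_two_rpow_neg_gapScale {l : ℕ → ℝ} (hδ : 0 < δ) (hδ1 : δ ≤ 1)
    {M N : ℕ} (hl : ∀ n ≥ M, l n ≤ 2 ^ (-gapScale δ n)) (hMN : M ≤ N) {ξ : ℝ} (hξ : ξ ≠ 0)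
    (hξN : |ξ| ≤ 2 ^ gapScale δ N) (k : ℕ) :
    2 ^ (N + k) * l (N + k) ≤ 2 ^ N / |ξ| * (1 / 2) ^ k := by
  have hξ₀ : 0 < |ξ| := abs_pos.2 hξ
  have hdecay : (2 : ℝ) ^ (-gapScale δ (N + k)) ≤ 2 ^ (-gapScale δ N) * ((2 ^ k) ^ 2)⁻¹ := by
    rw [← pow_mul, ← rpow_natCast, ← rpow_neg zero_le_two, ← rpow_add two_pos]
    gcongr
    · norm_num
    · push_cast
      linarith [gapScale_add_le hδ hδ1 N k]
  have hscale : (2 : ℝ) ^ (-gapScale δ N) ≤ |ξ|⁻¹ := by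
    rw [rpow_neg zero_le_two]
    exact inv_anti₀ hξ₀ hξN
  calc 2 ^ (N + k) * l (N + k) ≤ 2 ^ (N + k) * (2 ^ (-gapScale δ N) * ((2 ^ k) ^ 2)⁻¹) := by
        gcongr
        exact (hl _ (hMN.trans (N.le_add_right k))).trans hdecay
    _ ≤ 2 ^ (N + k) * (|ξ|⁻¹ * ((2 ^ k) ^ 2)⁻¹) := by gcongr
    _ = 2 ^ N / |ξ| * (1 / 2) ^ k := by
        rw [one_div_pow, pow_add]
        field_simp

theorem four_pow_lt_of_two_rpow_lt (hδ : 0 < δ) (hδ1 : δ ≤ 1) {N : ℕ} {x : ℝ}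
    (hx : 2 ^ (4 : ℝ) ^ ((N : ℝ) / δ) < x) : (4 : ℝ) ^ N < 2 * log (1 + x) ^ δ := by
  have hx₁ : 1 < x := lt_of_le_of_lt (one_le_rpow one_le_two (by positivity)) hx
  have hlog2 : 1 / 2 < log 2 := by linarith [log_two_gt_d9]
  have hlogx : 0 < log x := log_pos hx₁
  have hlog : 0 ≤ log (1 + x) := log_nonneg (by linarith)
  have hlogb : logb 2 x ≤ 2 * log (1 + x) :=
    calc logb 2 x = log x / log 2 := rfl
      _ ≤ log x / (1 / 2) := by gcongr
      _ ≤ 2 * log (1 + x) := by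
        have := log_le_log (by linarith) (by linarith : x ≤ 1 + x)
        linarith
  calc (4 : ℝ) ^ N = ((4 : ℝ) ^ ((N : ℝ) / δ)) ^ δ := by
        rw [← rpow_mul (by norm_num), div_mul_cancel₀ _ hδ.ne', rpow_natCast]
    _ < logb 2 x ^ δ := rpow_lt_rpow (rpow_nonneg (by norm_num) _)
        ((lt_logb_iff_rpow_lt one_lt_two (by linarith)).2 hx) hδ
    _ ≤ (2 * log (1 + x)) ^ δ := rpow_le_rpow (logb_pos one_lt_two hx₁).le hlogb hδ.le
    _ = 2 ^ δ * log (1 + x) ^ δ := mul_rpow zero_le_two hlog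
    _ ≤ 2 * log (1 + x) ^ δ := mul_le_mul_of_nonneg_right
        (by simpa using rpow_le_rpow_of_exponent_le one_le_two hδ1) (rpow_nonneg hlog _)

theorem exists_le_two_rpow_gapScale (hδ : 0 < δ) (hδ1 : δ ≤ 1) (M : ℕ) (ξ : ℝ) :
    ∃ N ≥ M, |ξ| ≤ 2 ^ gapScale δ N ∧ (4 : ℝ) ^ N ≤ 4 ^ M + 2 * log (1 + |ξ|) ^ δ := by
  have hex : ∃ k, |ξ| ≤ 2 ^ gapScale δ (M + k) := by
    obtain ⟨k, hk⟩ := pow_unbounded_of_one_lt |ξ| one_lt_two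
    refine ⟨k, hk.le.trans ?_⟩
    rw [← rpow_natCast]
    exact rpow_le_rpow_of_exponent_le one_le_two
      (by linarith [gapScale_add_le hδ hδ1 M k, gapScale_pos (δ := δ) M])
  refine ⟨M + Nat.find hex, M.le_add_right _, Nat.find_spec hex, ?_⟩
  have hlog : 0 ≤ log (1 + |ξ|) ^ δ := rpow_nonneg (log_nonneg (by linarith [abs_nonneg ξ])) _
  cases hk : Nat.find hex with
  | zero => simpa using hlog
  | succ j =>
    have hj : 2 ^ gapScale δ (M + j) < |ξ| := not_le.1 (Nat.find_min hex (by omega))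
    have hN : gapScale δ (M + j) = 4 ^ (((M + (j + 1) : ℕ) : ℝ) / δ) := by
      rw [gapScale]
      push_cast
      ring_nf
    rw [hN] at hj
    linarith [four_pow_lt_of_two_rpow_lt hδ hδ1 hj, pow_pos (by norm_num : (0 : ℝ) < 4) M]

end GapScale

theorem volume_real_cantorStage_diff_gCantorSet_le_of_le_two_rpow {α : ℕ → ℝ}
    (hα : ∀ n, α n ∈ Ioo (0 : ℝ) 1) {δ : ℝ} (hδ : 0 < δ) (hδ1 : δ ≤ 1) {M N : ℕ}
    (hM : ∀ n ≥ M, removedLen α n ≤ 2 ^ (-gapScale δ n)) (hMN : M ≤ N) {ξ : ℝ} (hξ : ξ ≠ 0)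
    (hξN : |ξ| ≤ 2 ^ gapScale δ N) :
    volume.real (cantorStage α N \ gCantorSet α) ≤ 2 * 2 ^ N / |ξ| := by
  refine (volume_real_cantorStage_diff_gCantorSet_le hα N
    (summable_geometric_two.mul_left (2 ^ N / |ξ|))
    (two_pow_mul_le_of_le_two_rpow_neg_gapScale hδ hδ1 hM hMN hξ hξN)).trans_eq ?_
  rw [tsum_mul_left, tsum_geometric_two]
  ring

/-- If the removed lengths `l_n` of a generalized Cantor set `C`
satisfy `∑ₙ l_n^(1/4^(n/δ)) < ∞` for some `δ ∈ (0,1)`, then for `I = [0,1] \ C`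
there is `λ > 0` with `|𝓕(χ_I)(ξ)|² ≤ λ (1 + log^δ(1+|ξ|)) / |ξ|²` for all `ξ ≠ 0`.
(Here `removedLen α n` is the paper's `l_{n+1}`.) -/
theorem stmt1 (α : ℕ → ℝ) (hα : ∀ n, α n ∈ Set.Ioo (0 : ℝ) 1) (δ : ℝ)
    (hδ : δ ∈ Set.Ioo (0 : ℝ) 1)
    (hsum : Summable fun n : ℕ => removedLen α n ^ ((4 : ℝ) ^ (-((n : ℝ) + 1) / δ))) :
    ∃ lam > (0 : ℝ), ∀ ξ : ℝ, ξ ≠ 0 →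
      ‖FourierTransform.fourier ((Set.Icc (0 : ℝ) 1 \ gCantorSet α).indicator
          fun _ => (1 : ℂ)) ξ‖ ^ 2 ≤
        lam * (1 + Real.log (1 + |ξ|) ^ δ) / |ξ| ^ 2 := by
  obtain ⟨hδ₀, hδ₁⟩ := hδ
  have hsum' : Summable fun n => removedLen α n ^ (gapScale δ n)⁻¹ := by
    simpa only [gapScale_inv] using hsum
  obtain ⟨M, hM⟩ := Filter.eventually_atTop.1 <| eventually_le_two_rpow_neg_of_summable
    (fun n => (removedLen_pos hα n).le) gapScale_pos hsum'
  refine ⟨9 * (4 ^ M + 2), by positivity, fun ξ hξ => ?_⟩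
  have hξ₀ : 0 < |ξ| := abs_pos.2 hξ
  obtain ⟨N, hMN, hξN, h4N⟩ := exists_le_two_rpow_gapScale hδ₀ hδ₁.le M ξ
  set L := log (1 + |ξ|) ^ δ
  have hL : 0 ≤ L := rpow_nonneg (log_nonneg (by linarith)) _
  have htail := volume_real_cantorStage_diff_gCantorSet_le_of_le_two_rpow hα hδ₀ hδ₁.le hM hMN
    hξ hξN
  have hhead : (2 : ℝ) ^ N / (π * |ξ|) ≤ 2 ^ N / |ξ| :=
    div_le_div_of_nonneg_left (by positivity) hξ₀ (le_mul_of_one_le_left hξ₀.le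
      (by linarith [pi_gt_three]))
  have hF := (norm_fourier_indicator_Icc_diff_gCantorSet_le hα N hξ).trans
    (add_le_add hhead htail)
  calc _ ≤ (2 ^ N / |ξ| + 2 * 2 ^ N / |ξ|) ^ 2 := pow_le_pow_left₀ (norm_nonneg _) hF 2
    _ = 9 * 4 ^ N / |ξ| ^ 2 := by
        rw [show (4 : ℝ) ^ N = (2 ^ N) ^ 2 by rw [← pow_mul, mul_comm, pow_mul]; norm_num]
        ring
    _ ≤ 9 * (4 ^ M + 2 * L) / |ξ| ^ 2 := by gcongr
    _ ≤ 9 * (4 ^ M + 2) * (1 + L) / |ξ| ^ 2 := by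
        gcongr ?_ / _
        nlinarith [pow_pos (by norm_num : (0 : ℝ) < 4) M]
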